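/- If a differentiable function g : ℝ → ℝ satisfies g'(x) > 0 for all x, then for every p ∈ ℝ the equation g(x) = p has at most one solution; applied to g(x) = x - f(x) with f(x) = x(x-1)(α-x) and α satisfying 4(α+1)² - 12(1+α) < 0, i.e. (α+1)(α-2) < 0, i.e. -1 < α < 2, this shows that the FitzHugh–Nagumo system has a unique equilibrium for every p. -/

import Mathlib

/-- A differentiable `g : ℝ → ℝ` with `g' > 0` everywhere has at most one solution of
`g(x) = p` for each `p`; applied to `g(x) = x - f(x)` with `f(x) = x(x-1)(α-x)` and
`-1 < α < 2`, the FitzHugh–Nagumo system has a unique equilibrium for every `p`. -/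
theorem unique_equilibrium_via_monotonicity :
    (∀ g : ℝ → ℝ, Differentiable ℝ g → (∀ x, 0 < deriv g x) →
      ∀ p : ℝ, {x : ℝ | g x = p}.Subsingleton) ∧
    (∀ α : ℝ, -1 < α → α < 2 →
      ∀ p : ℝ, ∃! x : ℝ, x * (x - 1) * (α - x) + p = x) := by
  constructor
  · intro g hg hg' p x hx y hy
    exact (strictMono_of_deriv_pos hg').injective (hx.trans hy.symm)
  · intro α hα1 hα2 p
    set g : ℝ → ℝ := fun x => x - x * (x - 1) * (α - x) with hgdef
    have hkey : ∀ x : ℝ, (x * (x - 1) * (α - x) + p = x) ↔ g x = p := by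
      intro x; simp only [g]; constructor <;> intro h <;> linarith
    have hgc : Continuous g := by fun_prop
    have hmono : StrictMono g := by
      apply strictMono_of_deriv_pos
      intro x
      have : HasDerivAt g (1 - ((2 * x - 1) * (α - x) + x * (x - 1) * (-1))) x := by
        have h1 : HasDerivAt (fun x : ℝ => x * (x - 1)) (1 * (x - 1) + x * 1) x :=
          (hasDerivAt_id x).mul ((hasDerivAt_id x).sub_const 1)
        have h2 : HasDerivAt (fun x : ℝ => α - x) (-1) x := by
          simpa using (hasDerivAt_id x).const_sub α
        have := (hasDerivAt_id x).sub (h1.mul h2)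
        exact this.congr_deriv (by ring)
      rw [this.deriv]
      nlinarith [sq_nonneg (x - (α + 1) / 3), sq_nonneg (α - 1/2), sq_nonneg x]
    have htop : Filter.Tendsto g Filter.atTop Filter.atTop := by
      apply Filter.tendsto_atTop_mono' _ _ Filter.tendsto_id
      filter_upwards [Filter.eventually_ge_atTop (2 : ℝ)] with x hx
      have h1 : (0:ℝ) ≤ x * (x - 1) * (x - α) :=
        mul_nonneg (mul_nonneg (by linarith) (by linarith)) (by linarith)
      simp only [g, id]; nlinarith
    have hbot : Filter.Tendsto g Filter.atBot Filter.atBot := by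
      apply Filter.tendsto_atBot_mono' _ _ Filter.tendsto_id
      filter_upwards [Filter.eventually_le_atBot (-1 : ℝ)] with x hx
      have h1 : x * (x - 1) * (x - α) ≤ 0 :=
        mul_nonpos_of_nonneg_of_nonpos
          (mul_nonneg_of_nonpos_of_nonpos (by linarith) (by linarith)) (by linarith)
      simp only [g, id]; nlinarith
    obtain ⟨x, hx⟩ := (hgc.surjective htop hbot) p
    refine ⟨x, (hkey x).mpr hx, fun y hy => hmono.injective ?_⟩
    rw [(hkey y).mp hy, hx]
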